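/- Let $(A,\cdot,\circ)$ be a skew brace. The set $\Gamma=\mathrm{Im}(\lambda)\,\mathrm{Im}(\rho)$ is a subgroup of $\mathrm{Aut}(A,\cdot)$ containing $\mathrm{Inn}(A,\cdot)$. -/
import Mathlib


/-- A skew brace structure on a group `(A, *)`: a second group operation `circ`
(with identity `e` and inverse `cinv`) satisfying the brace relation
`a ∘ (b * c) = (a ∘ b) * a⁻¹ * (a ∘ c)`. -/
structure SkewBrace (A : Type*) [Group A] where
  circ : A → A → A
  circ_assoc : ∀ a b c : A, circ (circ a b) c = circ a (circ b c)
  e : A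
  e_circ : ∀ a : A, circ e a = a
  circ_e : ∀ a : A, circ a e = a
  cinv : A → A
  cinv_circ : ∀ a : A, circ (cinv a) a = e
  circ_cinv : ∀ a : A, circ a (cinv a) = e
  brace : ∀ a b c : A, circ a (b * c) = circ a b * a⁻¹ * circ a c

namespace SkewBrace

variable {A : Type*} [Group A] (B : SkewBrace A)

lemma e_eq_one : B.e = 1 := by
  have h := B.brace B.e 1 1
  rw [one_mul, B.e_circ] at h
  have h2 : B.e⁻¹ = 1 := by simpa using h.symm
  simpa using congrArg Inv.inv h2

lemma circ_one (a : A) : B.circ a 1 = a := by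
  have h := B.brace a 1 1
  rw [one_mul] at h
  have h2 : (1 : A) = a⁻¹ * B.circ a 1 := by
    have := congrArg (fun y => (B.circ a 1)⁻¹ * y) h
    simpa [mul_assoc] using this
  have h3 : a * (1:A) = a * (a⁻¹ * B.circ a 1) := congrArg (a * ·) h2
  simp only [mul_one, ← mul_assoc, mul_inv_cancel, one_mul] at h3
  exact h3.symm

/-- `λ_a(x) = a⁻¹ (a ∘ x)`. -/
def lamFun (a x : A) : A := a⁻¹ * B.circ a x

lemma lamFun_mul (a x y : A) :
    B.lamFun a (x * y) = B.lamFun a x * B.lamFun a y := by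
  simp [lamFun, B.brace a x y, mul_assoc]

lemma lamFun_one (a : A) : B.lamFun a 1 = 1 := by
  simp [lamFun, B.circ_one]

lemma lamFun_inv (a x : A) : B.lamFun a x⁻¹ = (B.lamFun a x)⁻¹ := by
  have h := B.lamFun_mul a x x⁻¹
  rw [mul_inv_cancel, B.lamFun_one] at h
  exact eq_inv_of_mul_eq_one_right h.symm

lemma lamFun_lamFun (a b x : A) :
    B.lamFun a (B.lamFun b x) = B.lamFun (B.circ a b) x := by
  have h1 : B.lamFun a (B.lamFun b x)
      = B.lamFun a b⁻¹ * B.lamFun a (B.circ b x) := by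
    rw [lamFun, lamFun]
    rw [show b⁻¹ * B.circ b x = b⁻¹ * B.circ b x from rfl]
    rw [B.brace a b⁻¹ (B.circ b x)]
    simp [lamFun, mul_assoc]
  rw [h1, B.lamFun_inv]
  rw [lamFun, lamFun, lamFun]
  rw [B.circ_assoc]
  group

lemma lamFun_e (x : A) : B.lamFun B.e x = x := by
  rw [lamFun, B.e_circ, B.e_eq_one]
  simp

/-- `λ_a` as an automorphism of `(A, *)`. -/
def lam (a : A) : MulAut A where
  toFun := B.lamFun a
  invFun := B.lamFun (B.cinv a)
  left_inv := fun x => by rw [lamFun_lamFun, B.cinv_circ, lamFun_e]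
  right_inv := fun x => by rw [lamFun_lamFun, B.circ_cinv, lamFun_e]
  map_mul' := B.lamFun_mul a

@[simp] lemma lam_apply (a x : A) : B.lam a x = a⁻¹ * B.circ a x := rfl

lemma lam_mul_lam (a b : A) : B.lam a * B.lam b = B.lam (B.circ a b) := by
  ext x
  exact B.lamFun_lamFun a b x

lemma lam_e : B.lam B.e = 1 := by
  ext x
  exact B.lamFun_e x

lemma lam_inv (a : A) : (B.lam a)⁻¹ = B.lam (B.cinv a) := by
  have h : B.lam (B.cinv a) * B.lam a = 1 := by
    rw [B.lam_mul_lam, B.cinv_circ, B.lam_e]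
  exact (eq_inv_of_mul_eq_one_left h).symm

/-- `ρ_a` as an automorphism of `(A, *)`. -/
def rho (a : A) : MulAut A := MulAut.conj a * B.lam a

lemma rho_apply (a x : A) : B.rho a x = B.circ a x * a⁻¹ := by
  show MulAut.conj a (B.lam a x) = _
  rw [MulAut.conj_apply, lam_apply]
  group

/-- Key commutation: `λ_a ρ_b = C_{λ_a(b)} λ_{a∘b}`. -/
lemma key (a b : A) :
    B.lam a * B.rho b = MulAut.conj (B.lamFun a b) * B.lam (B.circ a b) := by
  ext x
  show B.lam a (B.rho b x) = MulAut.conj (B.lamFun a b) (B.lam (B.circ a b) x)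
  have h1 : B.rho b x = b * B.lamFun b x * b⁻¹ := by
    rw [rho_apply, lamFun]; group
  rw [h1]
  have h2 : B.lam a (b * B.lamFun b x * b⁻¹)
      = B.lamFun a b * B.lamFun a (B.lamFun b x) * (B.lamFun a b)⁻¹ := by
    rw [show (B.lam a : A → A) = B.lamFun a from rfl]
    rw [B.lamFun_mul, B.lamFun_mul, B.lamFun_inv]
  rw [h2, B.lamFun_lamFun, MulAut.conj_apply]
  rfl

/-- The image of `λ` as a subgroup of `MulAut A`. -/
def lamGroup : Subgroup (MulAut A) where
  carrier := {f | ∃ a : A, f = B.lam a}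
  one_mem' := ⟨B.e, B.lam_e.symm⟩
  mul_mem' := by
    rintro f g ⟨a, rfl⟩ ⟨b, rfl⟩
    exact ⟨B.circ a b, B.lam_mul_lam a b⟩
  inv_mem' := by
    rintro f ⟨a, rfl⟩
    exact ⟨B.cinv a, B.lam_inv a⟩

end SkewBrace

/-- The inner automorphism group as a subgroup of `MulAut A`. -/
def innGroup (A : Type*) [Group A] : Subgroup (MulAut A) :=
  (MulAut.conj : A →* MulAut A).range

instance innGroup_normal (A : Type*) [Group A] : (innGroup A).Normal := by
  constructor
  rintro n ⟨a, rfl⟩ g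
  refine ⟨g a, ?_⟩
  ext x
  simp [MulAut.conj_apply, mul_assoc]

open Pointwise in
/-- Gamma = Im(lambda) Im(rho) is a subgroup of Aut(A,*) containing Inn(A,*). -/
theorem gamma_subgroup {A : Type*} [Group A] (B : SkewBrace A) :
    letI L : Set (MulAut A) := {f | ∃ a : A, ∀ x : A, f x = a⁻¹ * B.circ a x}
    letI R : Set (MulAut A) := {f | ∃ a : A, ∀ x : A, f x = B.circ a x * a⁻¹}
    letI Inn : Set (MulAut A) := {f | ∃ a : A, f = MulAut.conj a}
    ∃ S : Subgroup (MulAut A), (S : Set (MulAut A)) = L * R ∧ Inn ⊆ S := by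
  refine ⟨innGroup A ⊔ B.lamGroup, ?_, ?_⟩
  · rw [Subgroup.normal_mul]
    ext f
    constructor
    · rintro ⟨g, ⟨u, rfl⟩, h, ⟨v, rfl⟩, rfl⟩
      -- MulAut.conj u * B.lam v ∈ L * R
      set a := v * u⁻¹ with ha
      set b := B.circ (B.cinv a) v with hb
      have hcirc : B.circ a b = v := by
        rw [hb, ← B.circ_assoc, B.circ_cinv, B.e_circ]
      have hlf : B.lamFun a b = u := by
        rw [SkewBrace.lamFun, hcirc, ha]
        group
      have heq : MulAut.conj u * B.lam v = B.lam a * B.rho b := by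
        rw [B.key a b, hcirc, hlf]
      show MulAut.conj u * B.lam v ∈ _
      rw [heq]
      exact Set.mul_mem_mul ⟨a, fun x => rfl⟩ ⟨b, fun x => B.rho_apply b x⟩
    · rintro ⟨g, ⟨a, hg⟩, h, ⟨b, hh⟩, rfl⟩
      have hga : g = B.lam a := MulEquiv.ext hg
      have hhb : h = B.rho b := MulEquiv.ext (fun x => by rw [hh x, B.rho_apply])
      show g * h ∈ _
      rw [hga, hhb, B.key a b]
      exact Set.mul_mem_mul ⟨B.lamFun a b, rfl⟩ ⟨B.circ a b, rfl⟩
  · rintro f ⟨a, rfl⟩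
    exact Subgroup.mem_sup_left ⟨a, rfl⟩
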